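/- Let Ω be a nonempty open subset of ℝⁿ and let F be a Taylorian 1-field on the closure of Ω (i.e. Γ¹(F;cl Ω) < +∞). Then Γ¹(F;Ω) = max{ Lip(Df;Ω) , Γ¹(F;∂Ω) }, where ∂Ω denotes the topological boundary of Ω. -/

import Mathlib

noncomputable section

open scoped RealInnerProductSpace

section GammaDefs

variable {H : Type*} [NormedAddCommGroup H] [InnerProductSpace ℝ H]

/-- Evaluation of the first-degree polynomial `F(x)` at `a`:
`F(x)(a) = f_x + ⟨D_xf, a - x⟩`. -/
def fieldEval (f : H → ℝ) (Df : H → H) (x a : H) : ℝ :=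
  f x + ⟪Df x, a - x⟫

/-- `Γ¹(F; x, y) = 2 · sup_{a} |F(x)(a) - F(y)(a)| / (‖x-a‖² + ‖y-a‖²)` for `x ≠ y`. -/
def gammaPair (f : H → ℝ) (Df : H → H) (x y : H) : ℝ :=
  ⨆ a : H, 2 * |fieldEval f Df x a - fieldEval f Df y a| / (‖x - a‖ ^ 2 + ‖y - a‖ ^ 2)

/-- The set of values `Γ¹(F; x, y)` for `x ≠ y` ranging over `S`. -/
def gammaVals (f : H → ℝ) (Df : H → H) (S : Set H) : Set ℝ :=
  {t | ∃ x ∈ S, ∃ y ∈ S, x ≠ y ∧ t = gammaPair f Df x y}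

/-- `Γ¹(F; S) = sup_{x ≠ y ∈ S} Γ¹(F; x, y)` (real supremum, `0` if `S` has at most one point). -/
def gammaOn (f : H → ℝ) (Df : H → H) (S : Set H) : ℝ :=
  sSup (gammaVals f Df S)

end GammaDefs

section LipDefs

variable {α β : Type*} [NormedAddCommGroup α] [NormedAddCommGroup β]

/-- The set of difference quotients `‖g x - g y‖ / ‖x - y‖`, `x ≠ y ∈ S`. -/
def lipVals (g : α → β) (S : Set α) : Set ℝ :=
  {t | ∃ x ∈ S, ∃ y ∈ S, x ≠ y ∧ t = ‖g x - g y‖ / ‖x - y‖}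

/-- `Lip(g; S) = sup_{x ≠ y ∈ S} ‖g x - g y‖ / ‖x - y‖` (real supremum). -/
def lipOn (g : α → β) (S : Set α) : ℝ :=
  sSup (lipVals g S)

end LipDefs

section PsiDefs

variable {H : Type*} [NormedAddCommGroup H] [InnerProductSpace ℝ H]

/-- `v_{a,b} = ½(D_af + D_bf) + (κ/2)(b - a)`. -/
def vab (Df : H → H) (κ : ℝ) (a b : H) : H :=
  (1 / 2 : ℝ) • (Df a + Df b) + (κ / 2) • (b - a)

/-- `α_{a,b}`. -/
def alphaab (f : H → ℝ) (Df : H → H) (κ : ℝ) (a b : H) : ℝ :=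
  2 * κ * (f a - f b) + κ * ⟪Df a + Df b, b - a⟫
    - 1 / 2 * ‖Df a - Df b‖ ^ 2 + κ ^ 2 / 2 * ‖a - b‖ ^ 2

/-- `β_{a,b}(x)`. -/
def betaab (Df : H → H) (κ : ℝ) (a b x : H) : ℝ :=
  ‖(1 / 2 : ℝ) • (Df a - Df b) + (κ / 2) • ((2 : ℝ) • x - a - b)‖ ^ 2

/-- `r_{a,b}(x) = √(α_{a,b} + β_{a,b}(x))`. -/
def rab (f : H → ℝ) (Df : H → H) (κ : ℝ) (a b x : H) : ℝ :=
  Real.sqrt (alphaab f Df κ a b + betaab Df κ a b x)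

/-- `Λ_x = {v : ‖v - v_{a,b}‖ ≤ r_{a,b}(x) for all a, b ∈ Ω}`. -/
def Lambda (f : H → ℝ) (Df : H → H) (κ : ℝ) (Ω : Set H) (x : H) : Set H :=
  {v | ∀ a ∈ Ω, ∀ b ∈ Ω, ‖v - vab Df κ a b‖ ≤ rab f Df κ a b x}

/-- `Ψ⁺(F, x, a, v)`. -/
def PsiPlus (f : H → ℝ) (Df : H → H) (κ : ℝ) (x a v : H) : ℝ :=
  f a + 1 / 2 * ⟪Df a + v, x - a⟫ + κ / 4 * ‖a - x‖ ^ 2 - 1 / (4 * κ) * ‖Df a - v‖ ^ 2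

/-- `Ψ⁻(F, x, a, v)`. -/
def PsiMinus (f : H → ℝ) (Df : H → H) (κ : ℝ) (x a v : H) : ℝ :=
  f a + 1 / 2 * ⟪Df a + v, x - a⟫ - κ / 4 * ‖a - x‖ ^ 2 + 1 / (4 * κ) * ‖Df a - v‖ ^ 2

/-- `inf_{a ∈ Ω} Ψ⁺(F, x, a, v)`. -/
def infPsiPlus (f : H → ℝ) (Df : H → H) (κ : ℝ) (Ω : Set H) (x v : H) : ℝ :=
  sInf {t | ∃ a ∈ Ω, t = PsiPlus f Df κ x a v}

/-- `sup_{a ∈ Ω} Ψ⁻(F, x, a, v)`. -/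
def supPsiMinus (f : H → ℝ) (Df : H → H) (κ : ℝ) (Ω : Set H) (x v : H) : ℝ :=
  sSup {t | ∃ a ∈ Ω, t = PsiMinus f Df κ x a v}

/-- `u⁺(x) = sup_{v ∈ Λ_x} inf_{a ∈ Ω} Ψ⁺(F, x, a, v)`. -/
def uPlus (f : H → ℝ) (Df : H → H) (κ : ℝ) (Ω : Set H) (x : H) : ℝ :=
  sSup {t | ∃ v ∈ Lambda f Df κ Ω x, t = infPsiPlus f Df κ Ω x v}

/-- `u⁻(x) = inf_{v ∈ Λ_x} sup_{a ∈ Ω} Ψ⁻(F, x, a, v)`. -/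
def uMinus (f : H → ℝ) (Df : H → H) (κ : ℝ) (Ω : Set H) (x : H) : ℝ :=
  sInf {t | ∃ v ∈ Lambda f Df κ Ω x, t = supPsiMinus f Df κ Ω x v}

/-- `(g, Dg)` is a minimal Lipschitz extension of the 1-field `(f, Df)` of domain `Ω` to `H`. -/
def IsMLE (f : H → ℝ) (Df : H → H) (Ω : Set H) (g : H → ℝ) (Dg : H → H) : Prop :=
  (∀ x ∈ Ω, g x = f x ∧ Dg x = Df x) ∧ gammaOn g Dg Set.univ = gammaOn f Df Ω

/-- Over extremal MLE. -/
def IsOverExtremal (f : H → ℝ) (Df : H → H) (Ω : Set H) (g₁ : H → ℝ) (Dg₁ : H → H) : Prop :=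
  IsMLE f Df Ω g₁ Dg₁ ∧ ∀ g Dg, IsMLE f Df Ω g Dg → ∀ x, g x ≤ g₁ x

/-- Under extremal MLE. -/
def IsUnderExtremal (f : H → ℝ) (Df : H → H) (Ω : Set H) (g₂ : H → ℝ) (Dg₂ : H → H) : Prop :=
  IsMLE f Df Ω g₂ Dg₂ ∧ ∀ g Dg, IsMLE f Df Ω g Dg → ∀ x, g₂ x ≤ g x

/-- Absolutely minimal Lipschitz extension. -/
def IsAMLE (f : H → ℝ) (Df : H → H) (Ω : Set H) (g : H → ℝ) (Dg : H → H) : Prop :=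
  IsMLE f Df Ω g Dg ∧
    ∀ V : Set H, V.Nonempty → IsOpen V → Bornology.IsBounded V → closure V ⊆ Ωᶜ →
      gammaOn g Dg V = gammaOn g Dg (frontier V)

end PsiDefs

/-!
The inequality `≥` is elementary: testing `Γ¹(F; x, y)` at the points `(x + y)/2 ± h` bounds
`‖D_xf - D_yf‖ / ‖x - y‖`, and a Taylorian field is continuous on `cl Ω`, so the values of `Γ¹`
on pairs of boundary points are limits of its values on pairs of points of `Ω`.

For `≤`, let `κ` be the right-hand side and fix `x, y ∈ Ω` and `w`. As `z` moves straight from `x`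
towards `w`, `F(z)(w) + κ/2 ‖z - w‖²` does not increase while the segment stays in `cl Ω`,
because `Lip(Df; cl Ω) ≤ κ`; the Taylor constant `Γ` of `F` on `cl Ω` only contributes errors of
order `(t' - t)²` between parameters `t < t'`, which a continuous induction absorbs. So `x` may be
replaced by the first point of `∂Ω ∪ {w}` on the segment, and likewise `y` for `-F`. For two
boundary points the required inequality `F(y)(w) - κ/2 ‖y - w‖² ≤ F(x)(w) + κ/2 ‖x - w‖²` is the
bound on `Γ¹(F; ∂Ω)`; if one of the points is `w`, it is the one-sided Taylor inequality
`f b ≤ F(a)(b) + κ/2 ‖a - b‖²` on `cl Ω`, again proved by continuous induction along `[a, b]`: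
the parts of the segment outside `cl Ω` begin and end on `∂Ω`, where the bound on `Γ¹(F; ∂Ω)`
bridges them.
-/

open Set Filter Topology

section ContinuousInduction

variable {T : Set ℝ} {a b C : ℝ} {g : ℝ → ℝ}

lemma exists_gt_le_add_mul_of_sub_le_mul_sq (hT : IsClosed T) (hb : b ∈ T)
    (step : ∀ t ∈ T, ∀ t' ∈ T, t ≤ t' → g t' - g t ≤ C * (t' - t) ^ 2)
    (gap : ∀ t ∈ T, ∀ t' ∈ T, t < t' → (∀ r ∈ Ioo t t', r ∉ T) → g t' ≤ g t)
    {ε : ℝ} (hε : 0 < ε) {m : ℝ} (hm : m ∈ T) (hmb : m < b) :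
    ∃ t ∈ T, m < t ∧ g t ≤ g m + ε * (t - m) := by
  have hRne : (T ∩ Ioc m b).Nonempty := ⟨b, hb, hmb, le_rfl⟩
  have hRbdd : BddBelow (T ∩ Ioc m b) := ⟨m, fun t ht => ht.2.1.le⟩
  have hτ : sInf (T ∩ Ioc m b) ∈ T ∩ Icc m b :=
    closure_minimal (fun _ ht => ⟨ht.1, ht.2.1.le, ht.2.2⟩ : T ∩ Ioc m b ⊆ T ∩ Icc m b)
      (hT.inter isClosed_Icc) (csInf_mem_closure hRne hRbdd)
  rcases hτ.2.1.eq_or_lt with heq | hlt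
  · -- `m` is approached by `T` from the right, so a single step loses at most `ε (t - m)`
    obtain ⟨t, ⟨htT, hmt, -⟩, htδ⟩ :=
      exists_lt_of_csInf_lt hRne (lt_add_of_pos_right _ (div_pos hε (by positivity :
        (0 : ℝ) < |C| + 1)))
    refine ⟨t, htT, hmt, ?_⟩
    rw [← heq, ← sub_lt_iff_lt_add', lt_div_iff₀ (by positivity)] at htδ
    have hCt : C * (t - m) ≤ ε := by
      nlinarith [le_abs_self C, abs_nonneg C]
    nlinarith [step m hm t htT hmt.le]
  · refine ⟨_, hτ.1, hlt, ?_⟩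
    have hjump := gap m hm _ hτ.1 hlt fun r hr hrT =>
      (csInf_le hRbdd ⟨hrT, hr.1, hr.2.le.trans hτ.2.2⟩).not_gt hr.2
    nlinarith

theorem le_of_sub_le_mul_sq (hT : IsClosed T) (hTab : T ⊆ Icc a b) (ha : a ∈ T) (hb : b ∈ T)
    (step : ∀ t ∈ T, ∀ t' ∈ T, t ≤ t' → g t' - g t ≤ C * (t' - t) ^ 2)
    (gap : ∀ t ∈ T, ∀ t' ∈ T, t < t' → (∀ r ∈ Ioo t t', r ∉ T) → g t' ≤ g t) :
    g b ≤ g a := by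
  have key : ∀ ε > 0, g b ≤ g a + ε * (b - a) := by
    intro ε hε
    set S := {t ∈ T | g t ≤ g a + ε * (t - a)}
    have hSne : S.Nonempty := ⟨a, ha, by simp⟩
    have hSbdd : BddAbove S := ⟨b, fun t ht => (hTab ht.1).2⟩
    have hmcl : sSup S ∈ closure S := csSup_mem_closure hSne hSbdd
    have hmT : sSup S ∈ T := closure_minimal (fun t ht => ht.1) hT hmcl
    have hmS : g (sSup S) ≤ g a + ε * (sSup S - a) := by
      obtain ⟨u, huS, hu⟩ := mem_closure_iff_seq_limit.1 hmcl
      have hlim := (((hu.sub_const a).const_mul ε).const_add (g a)).add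
        (((tendsto_const_nhds : Tendsto (fun _ : ℕ => sSup S) atTop _).sub hu).pow 2 |>.const_mul C)
      rw [sub_self, zero_pow two_ne_zero, mul_zero, add_zero] at hlim
      refine ge_of_tendsto hlim (Eventually.of_forall fun k => ?_)
      linarith [(huS k).2, step _ (huS k).1 _ hmT (le_csSup hSbdd (huS k))]
    have hmb : sSup S = b := by
      by_contra hne
      have hlt : sSup S < b := (csSup_le hSne fun t ht => (hTab ht.1).2).lt_of_ne hne
      obtain ⟨t, htT, hmt, ht⟩ :=
        exists_gt_le_add_mul_of_sub_le_mul_sq hT hb step gap hε hmT hlt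
      exact hmt.not_ge (le_csSup hSbdd ⟨htT, by linarith⟩)
    simpa [hmb] using hmS
  refine ge_of_tendsto (x := 𝓝[>] 0) ?_ (eventually_nhdsWithin_of_forall key)
  have : Tendsto (fun ε : ℝ => g a + ε * (b - a)) (𝓝 0) (𝓝 (g a)) := by
    simpa using ((continuous_id.mul continuous_const).const_add (g a)).tendsto (0 : ℝ)
  exact this.mono_left nhdsWithin_le_nhds

theorem le_of_sub_le_mul_sq_of_Icc (hab : a ≤ b)
    (step : ∀ t ∈ Icc a b, ∀ t' ∈ Icc a b, t ≤ t' → g t' - g t ≤ C * (t' - t) ^ 2) :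
    g b ≤ g a :=
  le_of_sub_le_mul_sq isClosed_Icc subset_rfl (left_mem_Icc.2 hab) (right_mem_Icc.2 hab) step
    fun t ht t' ht' htt' hgap => absurd ⟨by linarith [ht.1], by linarith [ht'.2]⟩
      (hgap ((t + t') / 2) ⟨by linarith, by linarith⟩)

end ContinuousInduction

section NormedGroup

variable {E F : Type*} [NormedAddCommGroup E] [NormedAddCommGroup F] {S : Set E}

lemma norm_sub_sq_add_norm_sub_sq_pos {x y : E} (hxy : x ≠ y) (a : E) :
    0 < ‖x - a‖ ^ 2 + ‖y - a‖ ^ 2 := by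
  rcases eq_or_ne x a with rfl | hxa
  · have : y - x ≠ 0 := sub_ne_zero.2 hxy.symm
    positivity
  · have : x - a ≠ 0 := sub_ne_zero.2 hxa
    positivity

lemma norm_neg_apply_sub_neg_apply {α : Type*} (g : α → F) (p q : α) :
    ‖(-g) p - (-g) q‖ = ‖g p - g q‖ := by
  rw [Pi.neg_apply, Pi.neg_apply, neg_sub_neg, norm_sub_rev]

lemma norm_sub_le_mul_of_mem_closure {g : E → F} {K : ℝ} (hg : ContinuousOn g (closure S))
    (h : ∀ p ∈ S, ∀ q ∈ S, ‖g p - g q‖ ≤ K * ‖p - q‖) :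
    ∀ p ∈ closure S, ∀ q ∈ closure S, ‖g p - g q‖ ≤ K * ‖p - q‖ := by
  intro p hp q hq
  have hcont : ContinuousOn (fun z : E × E => g z.1) (closure (S ×ˢ S)) := by
    rw [closure_prod_eq]; exact hg.comp continuousOn_fst fun z hz => hz.1
  have hcont' : ContinuousOn (fun z : E × E => g z.2) (closure (S ×ˢ S)) := by
    rw [closure_prod_eq]; exact hg.comp continuousOn_snd fun z hz => hz.2
  have hpq : (p, q) ∈ closure (S ×ˢ S) := by rw [closure_prod_eq]; exact ⟨hp, hq⟩
  exact le_on_closure (s := S ×ˢ S) (f := fun z => ‖g z.1 - g z.2‖)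
    (g := fun z => K * ‖z.1 - z.2‖) (fun z hz => h _ hz.1 _ hz.2) (hcont.sub hcont').norm
    (by fun_prop) hpq

lemma lipOn_nonneg (g : E → F) : 0 ≤ lipOn g S :=
  Real.sSup_nonneg fun _ ⟨_, _, _, _, _, ht⟩ => ht ▸ by positivity

lemma norm_sub_le_lipOn_mul {g : E → F} (hg : BddAbove (lipVals g S)) {p q : E}
    (hp : p ∈ S) (hq : q ∈ S) : ‖g p - g q‖ ≤ lipOn g S * ‖p - q‖ := by
  rcases eq_or_ne p q with rfl | hpq
  · simp
  exact (div_le_iff₀ (norm_sub_pos_iff.2 hpq)).1 (le_csSup hg ⟨p, hp, q, hq, hpq, rfl⟩)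

end NormedGroup

section GammaPair

variable {H : Type*} [NormedAddCommGroup H] [InnerProductSpace ℝ H]
  {f : H → ℝ} {Df : H → H} {x y : H}

def gammaQuot (f : H → ℝ) (Df : H → H) (x y a : H) : ℝ :=
  2 * |fieldEval f Df x a - fieldEval f Df y a| / (‖x - a‖ ^ 2 + ‖y - a‖ ^ 2)

lemma fieldEval_neg (x a : H) : fieldEval (-f) (-Df) x a = -fieldEval f Df x a := by
  simp only [fieldEval, Pi.neg_apply, inner_neg_left]
  ring

lemma fieldEval_sub_fieldEval (x y a : H) :
    fieldEval f Df x a - fieldEval f Df y a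
      = (f x - fieldEval f Df y x) + ⟪Df x - Df y, a - x⟫ := by
  simp only [fieldEval, inner_sub_left, inner_sub_right]
  ring

lemma bddAbove_range_gammaQuot (hxy : x ≠ y) : BddAbove (range (gammaQuot f Df x y)) := by
  set d := ‖x - y‖
  set c := |f x - fieldEval f Df y x|
  set K := ‖Df x - Df y‖
  have hd : 0 < d := norm_sub_pos_iff.2 hxy
  refine ⟨4 * (c + K * d) / d ^ 2, ?_⟩
  rintro _ ⟨a, rfl⟩
  set s := ‖x - a‖
  set D := ‖x - a‖ ^ 2 + ‖y - a‖ ^ 2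
  have hD : 0 < D := norm_sub_sq_add_norm_sub_sq_pos hxy a
  have hnum : |fieldEval f Df x a - fieldEval f Df y a| ≤ c + K * s := by
    rw [fieldEval_sub_fieldEval]
    refine (abs_add_le _ _).trans ?_
    gcongr
    exact (abs_real_inner_le_norm _ _).trans_eq (by rw [norm_sub_rev a x])
  have htri : d ≤ s + ‖y - a‖ := norm_sub_le_norm_sub_add_norm_sub x a y |>.trans_eq
    (by rw [norm_sub_rev a y])
  have hd2 : d ^ 2 ≤ 2 * D := by nlinarith [sq_nonneg (s - ‖y - a‖), norm_nonneg (y - a)]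
  have hsd : s * d ≤ 2 * D := by nlinarith [sq_nonneg (s - d), sq_nonneg ‖y - a‖]
  rw [gammaQuot, div_le_div_iff₀ hD (by positivity)]
  have hc : 0 ≤ c := abs_nonneg _
  have hK : 0 ≤ K := norm_nonneg _
  nlinarith [mul_le_mul_of_nonneg_right hnum (sq_nonneg d), mul_le_mul_of_nonneg_left hd2 hc,
    mul_le_mul_of_nonneg_left hsd (mul_nonneg hK hd.le)]

lemma gammaQuot_le_gammaPair (hxy : x ≠ y) (a : H) : gammaQuot f Df x y a ≤ gammaPair f Df x y :=
  le_ciSup (bddAbove_range_gammaQuot hxy) a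

lemma gammaPair_nonneg (hxy : x ≠ y) : 0 ≤ gammaPair f Df x y :=
  (by unfold gammaQuot; positivity : 0 ≤ gammaQuot f Df x y x).trans (gammaQuot_le_gammaPair hxy x)

lemma two_mul_abs_fieldEval_sub_le (hxy : x ≠ y) (a : H) :
    2 * |fieldEval f Df x a - fieldEval f Df y a|
      ≤ gammaPair f Df x y * (‖x - a‖ ^ 2 + ‖y - a‖ ^ 2) :=
  (div_le_iff₀ (norm_sub_sq_add_norm_sub_sq_pos hxy a)).1 (gammaQuot_le_gammaPair hxy a)

lemma gammaPair_neg : gammaPair (-f) (-Df) x y = gammaPair f Df x y := by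
  simp only [gammaPair, fieldEval_neg, neg_sub_neg, abs_sub_comm]

lemma two_mul_inner_le_gammaPair (hxy : x ≠ y) (h : H) :
    2 * ⟪Df x - Df y, h⟫ ≤ gammaPair f Df x y * (‖x - y‖ ^ 2 / 2 + 2 * ‖h‖ ^ 2) := by
  set u : H := (2 : ℝ)⁻¹ • (y - x)
  have hpar : ‖u + h‖ ^ 2 + ‖u - h‖ ^ 2 = ‖x - y‖ ^ 2 / 2 + 2 * ‖h‖ ^ 2 := by
    have hu : ‖u‖ = ‖x - y‖ / 2 := by
      rw [norm_smul, norm_inv, Real.norm_two, norm_sub_rev]; ring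
    rw [parallelogram_law_with_norm ℝ u h, hu]; ring
  have h₁ := two_mul_abs_fieldEval_sub_le (f := f) (Df := Df) hxy (x + (u + h))
  have h₂ := two_mul_abs_fieldEval_sub_le (f := f) (Df := Df) hxy (x + (u - h))
  have e₁ : ‖x - (x + (u + h))‖ ^ 2 + ‖y - (x + (u + h))‖ ^ 2 = ‖u + h‖ ^ 2 + ‖u - h‖ ^ 2 := by
    rw [show x - (x + (u + h)) = -(u + h) by abel, show y - (x + (u + h)) = u - h by module,
      norm_neg]
  have e₂ : ‖x - (x + (u - h))‖ ^ 2 + ‖y - (x + (u - h))‖ ^ 2 = ‖u + h‖ ^ 2 + ‖u - h‖ ^ 2 := by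
    rw [show x - (x + (u - h)) = -(u - h) by abel, show y - (x + (u - h)) = u + h by module,
      norm_neg, add_comm]
  rw [e₁, hpar] at h₁
  rw [e₂, hpar] at h₂
  have hdiff : (fieldEval f Df x (x + (u + h)) - fieldEval f Df y (x + (u + h)))
      - (fieldEval f Df x (x + (u - h)) - fieldEval f Df y (x + (u - h)))
      = 2 * ⟪Df x - Df y, h⟫ := by
    simp only [fieldEval_sub_fieldEval, add_sub_cancel_left, inner_add_right, inner_sub_right]
    ring
  linarith [le_abs_self (fieldEval f Df x (x + (u + h)) - fieldEval f Df y (x + (u + h))),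
    neg_abs_le (fieldEval f Df x (x + (u - h)) - fieldEval f Df y (x + (u - h)))]

lemma norm_sub_le_gammaPair_mul (hxy : x ≠ y) :
    ‖Df x - Df y‖ ≤ gammaPair f Df x y * ‖x - y‖ := by
  set v := Df x - Df y
  have hd : 0 < ‖x - y‖ := norm_sub_pos_iff.2 hxy
  rcases eq_or_ne v 0 with hv | hv
  · rw [hv, norm_zero]; exact mul_nonneg (gammaPair_nonneg hxy) hd.le
  have hv' : 0 < ‖v‖ := norm_pos_iff.2 hv
  have := two_mul_inner_le_gammaPair (f := f) (Df := Df) hxy ((‖x - y‖ / (2 * ‖v‖)) • v)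
  rw [inner_smul_right, real_inner_self_eq_norm_sq, norm_smul, Real.norm_eq_abs,
    abs_of_pos (by positivity)] at this
  field_simp at this
  nlinarith

/-- `Γ¹(F; x, y) ≤ κ` says exactly that `lowerQuad f Df κ y ≤ upperQuad f Df κ x` and
`lowerQuad f Df κ x ≤ upperQuad f Df κ y`. -/
def upperQuad (f : H → ℝ) (Df : H → H) (κ : ℝ) (z w : H) : ℝ :=
  fieldEval f Df z w + κ / 2 * ‖z - w‖ ^ 2

def lowerQuad (f : H → ℝ) (Df : H → H) (κ : ℝ) (z w : H) : ℝ :=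
  fieldEval f Df z w - κ / 2 * ‖z - w‖ ^ 2

@[simp] lemma upperQuad_self (κ : ℝ) (z : H) : upperQuad f Df κ z z = f z := by
  simp [upperQuad, fieldEval]

@[simp] lemma lowerQuad_self (κ : ℝ) (z : H) : lowerQuad f Df κ z z = f z := by
  simp [lowerQuad, fieldEval]

lemma upperQuad_neg (κ : ℝ) (z w : H) : upperQuad (-f) (-Df) κ z w = -lowerQuad f Df κ z w := by
  rw [upperQuad, lowerQuad, fieldEval_neg]; ring

lemma lowerQuad_le_upperQuad_of_gammaPair_le {G : ℝ} (hxy : x ≠ y) (hG : gammaPair f Df y x ≤ G)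
    (w : H) : lowerQuad f Df G y w ≤ upperQuad f Df G x w := by
  have := (two_mul_abs_fieldEval_sub_le (f := f) (Df := Df) hxy.symm w).trans
    (mul_le_mul_of_nonneg_right hG (by positivity))
  rw [lowerQuad, upperQuad]
  linarith [le_abs_self (fieldEval f Df y w - fieldEval f Df x w)]

lemma gammaPair_le_of_lowerQuad_le_upperQuad {G : ℝ} (hG : 0 ≤ G)
    (h : ∀ w, lowerQuad f Df G y w ≤ upperQuad f Df G x w ∧
      lowerQuad f Df G x w ≤ upperQuad f Df G y w) :
    gammaPair f Df x y ≤ G := by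
  refine Real.iSup_le (fun a => div_le_of_le_mul₀ (by positivity) hG ?_) hG
  obtain ⟨h₁, h₂⟩ := h a
  rw [lowerQuad, upperQuad] at h₁ h₂
  have : |fieldEval f Df x a - fieldEval f Df y a| ≤ G / 2 * (‖x - a‖ ^ 2 + ‖y - a‖ ^ 2) :=
    abs_sub_le_iff.2 ⟨by linarith, by linarith⟩
  linarith

end GammaPair

section GammaOn

variable {H : Type*} [NormedAddCommGroup H] [InnerProductSpace ℝ H]
  {f : H → ℝ} {Df : H → H} {S : Set H} {G : ℝ} {p q : H}

lemma gammaVals_neg : gammaVals (-f) (-Df) S = gammaVals f Df S := by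
  simp only [gammaVals, gammaPair_neg]

lemma gammaVals_mono {T : Set H} (hST : S ⊆ T) : gammaVals f Df S ⊆ gammaVals f Df T := by
  rintro _ ⟨x, hx, y, hy, hxy, rfl⟩
  exact ⟨x, hST hx, y, hST hy, hxy, rfl⟩

lemma gammaOn_nonneg : 0 ≤ gammaOn f Df S :=
  Real.sSup_nonneg fun _ ⟨_, _, _, _, hxy, ht⟩ => ht ▸ gammaPair_nonneg hxy

lemma gammaPair_le_gammaOn (hS : BddAbove (gammaVals f Df S)) (hp : p ∈ S) (hq : q ∈ S)
    (hpq : p ≠ q) : gammaPair f Df p q ≤ gammaOn f Df S :=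
  le_csSup hS ⟨p, hp, q, hq, hpq, rfl⟩

lemma gammaOn_mem_upperBounds_lipVals (hS : BddAbove (gammaVals f Df S)) :
    gammaOn f Df S ∈ upperBounds (lipVals Df S) := by
  rintro _ ⟨p, hp, q, hq, hpq, rfl⟩
  rw [div_le_iff₀ (norm_sub_pos_iff.2 hpq)]
  exact (norm_sub_le_gammaPair_mul hpq).trans
    (mul_le_mul_of_nonneg_right (gammaPair_le_gammaOn hS hp hq hpq) (norm_nonneg _))

lemma lipOn_le_gammaOn (hS : BddAbove (gammaVals f Df S)) : lipOn Df S ≤ gammaOn f Df S :=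
  Real.sSup_le (gammaOn_mem_upperBounds_lipVals hS) gammaOn_nonneg

lemma gammaPair_le_gammaOn_of_mem_closure (hS : BddAbove (gammaVals f Df S))
    (hf : ContinuousOn f (closure S)) (hDf : ContinuousOn Df (closure S)) {x y : H}
    (hx : x ∈ closure S) (hy : y ∈ closure S) (hxy : x ≠ y) :
    gammaPair f Df x y ≤ gammaOn f Df S := by
  refine Real.iSup_le (fun c => ?_) gammaOn_nonneg
  have hE : ContinuousOn (fun z => fieldEval f Df z c) (closure S) :=
    hf.add (hDf.inner (continuousOn_const.sub continuousOn_id))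
  have hnum : ContinuousWithinAt
      (fun z : H × H => 2 * |fieldEval f Df z.1 c - fieldEval f Df z.2 c|) (S ×ˢ S) (x, y) := by
    have := (continuousOn_const (c := (2 : ℝ))).mul
      ((hE.comp continuousOn_fst fun (z : H × H) (hz : z ∈ closure S ×ˢ closure S) => hz.1).sub
        (hE.comp continuousOn_snd fun (z : H × H) (hz : z ∈ closure S ×ˢ closure S) => hz.2)).abs
    exact (this (x, y) ⟨hx, hy⟩).mono (prod_mono subset_closure subset_closure)
  have hden : ContinuousWithinAt (fun z : H × H => ‖z.1 - c‖ ^ 2 + ‖z.2 - c‖ ^ 2) (S ×ˢ S) (x, y) :=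
    (by fun_prop : Continuous fun z : H × H => ‖z.1 - c‖ ^ 2 + ‖z.2 - c‖ ^ 2).continuousWithinAt
  refine ContinuousWithinAt.closure_le (f := fun z : H × H => gammaQuot f Df z.1 z.2 c)
    (by rw [closure_prod_eq]; exact ⟨hx, hy⟩)
    (hnum.div hden (norm_sub_sq_add_norm_sub_sq_pos hxy c).ne') continuousWithinAt_const ?_
  rintro ⟨p, q⟩ ⟨hp, hq⟩
  rcases eq_or_ne p q with rfl | hpq
  · simpa [gammaQuot] using gammaOn_nonneg
  exact (gammaQuot_le_gammaPair hpq c).trans (gammaPair_le_gammaOn hS hp hq hpq)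

lemma gammaOn_le_of_subset_closure (hS : BddAbove (gammaVals f Df S))
    (hf : ContinuousOn f (closure S)) (hDf : ContinuousOn Df (closure S)) {T : Set H}
    (hT : T ⊆ closure S) : gammaOn f Df T ≤ gammaOn f Df S :=
  Real.sSup_le (fun _ ⟨_, hx, _, hy, hxy, ht⟩ =>
    ht ▸ gammaPair_le_gammaOn_of_mem_closure hS hf hDf (hT hx) (hT hy) hxy) gammaOn_nonneg

variable (hG : G ∈ upperBounds (gammaVals f Df S))
include hG

lemma lowerQuad_le_upperQuad_of_mem_upperBounds (hG0 : 0 ≤ G) (hp : p ∈ S) (hq : q ∈ S)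
    (w : H) : lowerQuad f Df G q w ≤ upperQuad f Df G p w := by
  rcases eq_or_ne p q with rfl | hpq
  · rw [lowerQuad, upperQuad]; linarith [mul_nonneg hG0 (sq_nonneg ‖p - w‖)]
  exact lowerQuad_le_upperQuad_of_gammaPair_le hpq (hG ⟨q, hq, p, hp, hpq.symm, rfl⟩) w

lemma le_upperQuad_of_mem_upperBounds (hp : p ∈ S) (hq : q ∈ S) : f q ≤ upperQuad f Df G p q := by
  rcases eq_or_ne p q with rfl | hpq
  · simp
  have hG0 : 0 ≤ G := (gammaPair_nonneg hpq.symm).trans (hG ⟨q, hq, p, hp, hpq.symm, rfl⟩)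
  simpa using lowerQuad_le_upperQuad_of_mem_upperBounds hG hG0 hp hq q

lemma abs_sub_fieldEval_le_of_mem_upperBounds (hp : p ∈ S) (hq : q ∈ S) :
    |f q - fieldEval f Df p q| ≤ G / 2 * ‖p - q‖ ^ 2 := by
  have h := le_upperQuad_of_mem_upperBounds hG hp hq
  have hneg := le_upperQuad_of_mem_upperBounds (f := -f) (Df := -Df)
    (by rwa [gammaVals_neg]) hp hq
  rw [upperQuad_neg, Pi.neg_apply, lowerQuad] at hneg
  rw [upperQuad] at h
  exact abs_le.2 ⟨by linarith, by linarith⟩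

lemma norm_sub_le_of_mem_upperBounds (hp : p ∈ S) (hq : q ∈ S) :
    ‖Df p - Df q‖ ≤ G * ‖p - q‖ := by
  rcases eq_or_ne p q with rfl | hpq
  · simp
  exact (norm_sub_le_gammaPair_mul hpq).trans
    (mul_le_mul_of_nonneg_right (hG ⟨p, hp, q, hq, hpq, rfl⟩) (norm_nonneg _))

lemma continuousOn_deriv_of_mem_upperBounds : ContinuousOn Df S :=
  (LipschitzOnWith.of_dist_le_mul fun p hp q hq => by
    simpa only [dist_eq_norm] using (norm_sub_le_of_mem_upperBounds hG hp hq).trans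
      (mul_le_mul_of_nonneg_right (Real.le_coe_toNNReal G) (norm_nonneg _))).continuousOn

lemma continuousOn_of_mem_upperBounds : ContinuousOn f S := by
  intro p hp
  rw [ContinuousWithinAt, tendsto_iff_norm_sub_tendsto_zero]
  have hbound : Tendsto (fun q => G / 2 * ‖p - q‖ ^ 2 + ‖Df p‖ * ‖q - p‖) (𝓝[S] p) (𝓝 0) := by
    have : Continuous fun q => G / 2 * ‖p - q‖ ^ 2 + ‖Df p‖ * ‖q - p‖ := by fun_prop
    simpa using (this.tendsto p).mono_left nhdsWithin_le_nhds
  refine squeeze_zero_norm' (eventually_nhdsWithin_of_forall fun q hq => ?_) hbound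
  have htay := abs_sub_fieldEval_le_of_mem_upperBounds hG hp hq
  have hinner := abs_real_inner_le_norm (Df p) (q - p)
  rw [norm_norm, Real.norm_eq_abs]
  calc |f q - f p| = |(f q - fieldEval f Df p q) + ⟪Df p, q - p⟫| := by
        simp only [fieldEval]; ring_nf
    _ ≤ _ := (abs_add_le _ _).trans (add_le_add htay hinner)

end GammaOn

lemma mem_frontier_of_mem_closure_Ioo {X : Type*} [TopologicalSpace X] {Ω : Set X}
    (hΩ : IsOpen Ω) {γ : ℝ → X} (hγ : Continuous γ) {t t' s : ℝ} (hs : s ∈ closure (Ioo t t'))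
    (hgap : ∀ r ∈ Ioo t t', γ r ∉ closure Ω) (hγs : γ s ∈ closure Ω) : γ s ∈ frontier Ω := by
  refine hΩ.frontier_eq ▸ ⟨hγs, fun hγsΩ => ?_⟩
  obtain ⟨r, hrΩ, hr⟩ := mem_closure_iff.1 hs _ (hΩ.preimage hγ) hγsΩ
  exact hgap r hr (subset_closure hrΩ)

section Segment

open AffineMap

variable {E : Type*} [NormedAddCommGroup E] [NormedSpace ℝ E] {Ω : Set E}

lemma norm_lineMap_sub_lineMap (a b : E) (t t' : ℝ) :
    ‖lineMap a b t - lineMap a b t'‖ = |t - t'| * ‖a - b‖ := by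
  simpa only [dist_eq_norm, Real.norm_eq_abs] using dist_lineMap_lineMap a b t t'

lemma norm_lineMap_sub_lineMap_eq_add (a b : E) {t t' t'' : ℝ} (h : t ≤ t') (h' : t' ≤ t'') :
    ‖lineMap a b t - lineMap a b t''‖
      = ‖lineMap a b t - lineMap a b t'‖ + ‖lineMap a b t' - lineMap a b t''‖ := by
  simp only [norm_lineMap_sub_lineMap, abs_of_nonpos (sub_nonpos.2 h),
    abs_of_nonpos (sub_nonpos.2 h'), abs_of_nonpos (sub_nonpos.2 (h.trans h'))]
  ring

lemma exists_lineMap_mem_frontier_or_eq_one (hΩ : IsOpen Ω) {x : E} (hx : x ∈ Ω) (w : E) :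
    ∃ s ∈ Icc (0 : ℝ) 1, (lineMap x w s ∈ frontier Ω ∨ s = 1) ∧
      ∀ t ∈ Icc 0 s, lineMap x w t ∈ closure Ω := by
  have hγ : Continuous (lineMap x w : ℝ → E) := lineMap_continuous
  set K := Icc (0 : ℝ) 1 ∩ ((lineMap x w : ℝ → E) ⁻¹' Ωᶜ ∪ {1})
  have hK : IsClosed K :=
    isClosed_Icc.inter ((hΩ.isClosed_compl.preimage hγ).union isClosed_singleton)
  have hKne : K.Nonempty := ⟨1, right_mem_Icc.2 zero_le_one, Or.inr rfl⟩
  have hsK : sInf K ∈ K := hK.csInf_mem hKne ⟨0, fun t ht => ht.1.1⟩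
  have hbefore : ∀ t ∈ Ico 0 (sInf K), lineMap x w t ∈ Ω := fun t ht => by
    by_contra hout
    have htK : t ∈ K := ⟨⟨ht.1, ht.2.le.trans hsK.1.2⟩, Or.inl hout⟩
    exact (csInf_le ⟨0, fun t ht => ht.1.1⟩ htK).not_gt ht.2
  have hpos : 0 < sInf K := hsK.1.1.lt_of_ne fun h0 => by
    rcases h0 ▸ hsK.2 with hout | h01
    · exact hout (by simpa using hx)
    · exact zero_ne_one h01
  have hsΩ : lineMap x w (sInf K) ∈ closure Ω :=
    map_mem_closure hγ (by rw [closure_Ico hpos.ne]; exact right_mem_Icc.2 hpos.le) hbefore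
  refine ⟨sInf K, hsK.1, ?_, fun t ht => ?_⟩
  · rcases hsK.2 with hout | h1
    · exact Or.inl (hΩ.frontier_eq ▸ ⟨hsΩ, hout⟩)
    · exact Or.inr h1
  · rcases ht.2.lt_or_eq with hlt | rfl
    · exact subset_closure (hbefore t ⟨ht.1, hlt⟩)
    · exact hsΩ

end Segment

section UpperBound

open AffineMap

variable {H : Type*} [NormedAddCommGroup H] [InnerProductSpace ℝ H]
  {f : H → ℝ} {Df : H → H} {Ω : Set H} {Γ κ G : ℝ}

lemma sub_upperQuad_sub_le {a p q : H} (hcol : ‖a - q‖ = ‖a - p‖ + ‖p - q‖)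
    (hrem : f q ≤ upperQuad f Df G p q) (hlip : ‖Df p - Df a‖ ≤ κ * ‖p - a‖) :
    (f q - upperQuad f Df κ a q) - (f p - upperQuad f Df κ a p) ≤ (G - κ) / 2 * ‖p - q‖ ^ 2 := by
  have hsplit : fieldEval f Df a q - fieldEval f Df a p
      = fieldEval f Df p q - f p - ⟪Df p - Df a, q - p⟫ := by
    simp only [fieldEval, inner_sub_left, inner_sub_right]; ring
  have hinner : ⟪Df p - Df a, q - p⟫ ≤ κ * ‖a - p‖ * ‖p - q‖ :=
    (real_inner_le_norm _ _).trans (by rw [norm_sub_rev a p, norm_sub_rev p q]; gcongr)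
  rw [upperQuad] at hrem ⊢
  rw [upperQuad, hcol]
  nlinarith

lemma upperQuad_sub_upperQuad_le {p q w : H} (hcol : ‖p - w‖ = ‖p - q‖ + ‖q - w‖)
    (hrem : f q ≤ upperQuad f Df G p q) (hlip : ‖Df q - Df p‖ ≤ κ * ‖q - p‖) :
    upperQuad f Df κ q w - upperQuad f Df κ p w ≤ (G - κ) / 2 * ‖p - q‖ ^ 2 := by
  have hsplit : fieldEval f Df q w - fieldEval f Df p w
      = (f q - fieldEval f Df p q) + ⟪Df q - Df p, w - q⟫ := by
    simp only [fieldEval, inner_sub_left, inner_sub_right]; ring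
  have hinner : ⟪Df q - Df p, w - q⟫ ≤ κ * ‖p - q‖ * ‖q - w‖ :=
    (real_inner_le_norm _ _).trans (by rw [norm_sub_rev p q, norm_sub_rev q w]; gcongr)
  rw [upperQuad] at hrem
  rw [upperQuad, upperQuad, hcol]
  nlinarith

variable (hΩ : IsOpen Ω) (hΓ : Γ ∈ upperBounds (gammaVals f Df (closure Ω)))
  (hLip : ∀ p ∈ closure Ω, ∀ q ∈ closure Ω, ‖Df p - Df q‖ ≤ κ * ‖p - q‖)
include hΩ hΓ hLip

theorem le_upperQuad_of_mem_closure (hκ : κ ∈ upperBounds (gammaVals f Df (frontier Ω)))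
    {a b : H} (ha : a ∈ closure Ω) (hb : b ∈ closure Ω) : f b ≤ upperQuad f Df κ a b := by
  have hγ : Continuous (lineMap a b : ℝ → H) := lineMap_continuous
  set T := Icc (0 : ℝ) 1 ∩ (lineMap a b : ℝ → H) ⁻¹' closure Ω
  have hstep : ∀ {G' t t' : ℝ}, t ∈ T → t ≤ t' →
      f (lineMap a b t') ≤ upperQuad f Df G' (lineMap a b t) (lineMap a b t') →
      (f (lineMap a b t') - upperQuad f Df κ a (lineMap a b t'))
        - (f (lineMap a b t) - upperQuad f Df κ a (lineMap a b t))
        ≤ (G' - κ) / 2 * ‖a - b‖ ^ 2 * (t' - t) ^ 2 := by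
    intro G' t t' ht htt' hrem
    have hcol := norm_lineMap_sub_lineMap_eq_add a b ht.1.1 htt'
    rw [lineMap_apply_zero] at hcol
    refine (sub_upperQuad_sub_le hcol hrem (hLip _ ht.2 a ha)).trans_eq ?_
    rw [norm_lineMap_sub_lineMap, mul_pow, sq_abs]; ring
  have key := le_of_sub_le_mul_sq (C := (Γ - κ) / 2 * ‖a - b‖ ^ 2)
    (g := fun t => f (lineMap a b t) - upperQuad f Df κ a (lineMap a b t))
    (isClosed_Icc.inter (isClosed_closure.preimage hγ)) inter_subset_left
    ⟨left_mem_Icc.2 zero_le_one, by simpa using ha⟩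
    ⟨right_mem_Icc.2 zero_le_one, by simpa using hb⟩
    (fun t ht t' ht' htt' => hstep ht htt' (le_upperQuad_of_mem_upperBounds hΓ ht.2 ht'.2))
    (fun t ht t' ht' htt' hgap => by
      have hout : ∀ r ∈ Ioo t t', lineMap a b r ∉ closure Ω := fun r hr hrΩ =>
        hgap r hr ⟨⟨ht.1.1.trans hr.1.le, hr.2.le.trans ht'.1.2⟩, hrΩ⟩
      have hcl := closure_Ioo htt'.ne
      have hfr := mem_frontier_of_mem_closure_Ioo hΩ hγ (hcl ▸ left_mem_Icc.2 htt'.le) hout ht.2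
      have hfr' := mem_frontier_of_mem_closure_Ioo hΩ hγ (hcl ▸ right_mem_Icc.2 htt'.le) hout
        ht'.2
      simpa using hstep ht htt'.le (le_upperQuad_of_mem_upperBounds hκ hfr hfr'))
  simpa using key

lemma exists_upperQuad_le {x : H} (hx : x ∈ Ω) (w : H) :
    ∃ z ∈ closure Ω, (z ∈ frontier Ω ∨ z = w) ∧ upperQuad f Df κ z w ≤ upperQuad f Df κ x w := by
  obtain ⟨s, hs, hend, hseg⟩ := exists_lineMap_mem_frontier_or_eq_one hΩ hx w
  refine ⟨lineMap x w s, hseg s (right_mem_Icc.2 hs.1),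
    hend.imp_right fun h => by rw [h, lineMap_apply_one], ?_⟩
  have key := le_of_sub_le_mul_sq_of_Icc (C := (Γ - κ) / 2 * ‖x - w‖ ^ 2)
    (g := fun t => upperQuad f Df κ (lineMap x w t) w) hs.1
    fun t ht t' ht' htt' => by
      have hcol := norm_lineMap_sub_lineMap_eq_add x w htt' (ht'.2.trans hs.2)
      rw [lineMap_apply_one] at hcol
      refine (upperQuad_sub_upperQuad_le hcol (le_upperQuad_of_mem_upperBounds hΓ (hseg t ht)
        (hseg t' ht')) (hLip _ (hseg t' ht') _ (hseg t ht))).trans_eq ?_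
      rw [norm_lineMap_sub_lineMap, mul_pow, sq_abs]; ring
  simpa using key

variable (hκ : κ ∈ upperBounds (gammaVals f Df (frontier Ω))) (hκ0 : 0 ≤ κ)
include hκ hκ0

lemma lowerQuad_le_upperQuad_of_mem_frontier_or_eq {z z' w : H} (hz : z ∈ closure Ω)
    (hz' : z' ∈ closure Ω) (hzw : z ∈ frontier Ω ∨ z = w) (hz'w : z' ∈ frontier Ω ∨ z' = w) :
    lowerQuad f Df κ z' w ≤ upperQuad f Df κ z w := by
  rcases hz'w with hz'f | rfl
  · rcases hzw with hzf | rfl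
    · exact lowerQuad_le_upperQuad_of_mem_upperBounds hκ hκ0 hzf hz'f w
    · have := le_upperQuad_of_mem_closure (f := -f) (Df := -Df) hΩ (by rwa [gammaVals_neg])
        (fun p hp q hq => (norm_neg_apply_sub_neg_apply Df p q).trans_le (hLip p hp q hq))
        (by rwa [gammaVals_neg]) hz' hz
      rw [upperQuad_neg, Pi.neg_apply] at this
      simpa using neg_le_neg this
  · simpa using le_upperQuad_of_mem_closure hΩ hΓ hLip hκ hz hz'

theorem mem_upperBounds_gammaVals : κ ∈ upperBounds (gammaVals f Df Ω) := by
  have hquad : ∀ x ∈ Ω, ∀ y ∈ Ω, ∀ w, lowerQuad f Df κ y w ≤ upperQuad f Df κ x w := by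
    intro x hx y hy w
    obtain ⟨z, hz, hzw, hzx⟩ := exists_upperQuad_le hΩ hΓ hLip hx w
    obtain ⟨z', hz', hz'w, hz'y⟩ := exists_upperQuad_le (f := -f) (Df := -Df) hΩ
      (by rwa [gammaVals_neg])
      (fun p hp q hq => (norm_neg_apply_sub_neg_apply Df p q).trans_le (hLip p hp q hq)) hy w
    rw [upperQuad_neg, upperQuad_neg, neg_le_neg_iff] at hz'y
    exact hz'y.trans ((lowerQuad_le_upperQuad_of_mem_frontier_or_eq hΩ hΓ hLip hκ hκ0 hz hz'
      hzw hz'w).trans hzx)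
  rintro _ ⟨x, hx, y, hy, -, rfl⟩
  exact gammaPair_le_of_lowerQuad_le_upperQuad hκ0 fun w => ⟨hquad x hx y hy w, hquad y hy x hx w⟩

end UpperBound

theorem stmt_6_general {n : ℕ} (Ω : Set (EuclideanSpace ℝ (Fin n)))
    (hΩop : IsOpen Ω)
    (f : EuclideanSpace ℝ (Fin n) → ℝ)
    (Df : EuclideanSpace ℝ (Fin n) → EuclideanSpace ℝ (Fin n))
    (hTay : BddAbove (gammaVals f Df (closure Ω))) :
    gammaOn f Df Ω = max (lipOn Df Ω) (gammaOn f Df (frontier Ω)) := by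
  obtain ⟨Γ, hΓ⟩ := hTay
  have hbdd : BddAbove (gammaVals f Df Ω) :=
    ⟨Γ, fun _ ht => hΓ (gammaVals_mono subset_closure ht)⟩
  have hf := continuousOn_of_mem_upperBounds hΓ
  have hDf := continuousOn_deriv_of_mem_upperBounds hΓ
  set κ := max (lipOn Df Ω) (gammaOn f Df (frontier Ω))
  have hκ0 : 0 ≤ κ := (lipOn_nonneg Df).trans (le_max_left _ _)
  have hLip : ∀ p ∈ closure Ω, ∀ q ∈ closure Ω, ‖Df p - Df q‖ ≤ κ * ‖p - q‖ :=
    norm_sub_le_mul_of_mem_closure hDf fun p hp q hq =>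
      (norm_sub_le_lipOn_mul ⟨_, gammaOn_mem_upperBounds_lipVals hbdd⟩ hp hq).trans
        (mul_le_mul_of_nonneg_right (le_max_left _ _) (norm_nonneg _))
  have hκ : κ ∈ upperBounds (gammaVals f Df (frontier Ω)) := fun _ ht =>
    (le_csSup ⟨Γ, fun _ ht' => hΓ (gammaVals_mono frontier_subset_closure ht')⟩ ht).trans
      (le_max_right _ _)
  exact le_antisymm (Real.sSup_le (mem_upperBounds_gammaVals hΩop hΓ hLip hκ hκ0) hκ0)
    (max_le (lipOn_le_gammaOn hbdd)
      (gammaOn_le_of_subset_closure hbdd hf hDf frontier_subset_closure))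

/-- If `Ω ⊆ ℝⁿ` is nonempty and open and `F = (f, Df)` is a Taylorian
1-field on the closure of `Ω`, then `Γ¹(F;Ω) = max { Lip(Df;Ω), Γ¹(F;∂Ω) }`. -/
theorem stmt_6 {n : ℕ} (hn : 1 ≤ n) (Ω : Set (EuclideanSpace ℝ (Fin n)))
    (hΩne : Ω.Nonempty) (hΩop : IsOpen Ω)
    (f : EuclideanSpace ℝ (Fin n) → ℝ)
    (Df : EuclideanSpace ℝ (Fin n) → EuclideanSpace ℝ (Fin n))
    (hTay : BddAbove (gammaVals f Df (closure Ω))) :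
    gammaOn f Df Ω = max (lipOn Df Ω) (gammaOn f Df (frontier Ω)) :=
  stmt_6_general Ω hΩop f Df hTay
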